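/- Let T♭_k and T♯_k (k ≥ 0) be the iterates T_0 = T♭, T_{k+1} = T_k⊗T_k and T_0 = T♯, T_{k+1} = T_k⊗T_k, respectively. Then for every integer k ≥ 0: α(T♭_k) = k+2, β(T♭_k) = 3·2^k−1, δ(T♭_k) = 3·2^k+k+1, g(T♭_k) = 3·2^k, n(T♭_k) = (9/2)·4^k+(9/2)·2^k; and α(T♯_k) = k+2, β(T♯_k) = 6·2^k−1, δ(T♯_k) = 6·2^k+k+1, g(T♯_k) = 6·2^k, n(T♯_k) = 18·4^k+3·2^k. -/

import Mathlib

/-- The three-letter alphabet `S = {0, 1, ∗}`. -/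
inductive Tern | zero | one | star
deriving DecidableEq, Repr

/-- A string over `S`. -/
abbrev Str := List Tern

/-- A (ordered) list of strings over `S`. -/
abbrev SList := List Str

/-- `clash x y` is true iff both `x, y ∈ {0,1}` and `x ≠ y`. -/
def clash : Tern → Tern → Bool
  | Tern.zero, Tern.one => true
  | Tern.one, Tern.zero => true
  | _, _ => false

/-- `dist u v`: the number of positions where both letters are binary and differ. -/
def distS (u v : Str) : ℕ := (u.zip v).countP (fun p => clash p.1 p.2)

/-- all strings of a list have length `m` -/
def uniform (L : SList) (m : ℕ) : Prop := ∀ s ∈ L, s.length = m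

/-- A list is `k`-neighborly if any two entries occupying distinct positions `u, v`
satisfy `1 ≤ dist(u,v) ≤ k`. -/
def kNbr (k : ℕ) (L : SList) : Prop :=
  L.Pairwise (fun u v => 1 ≤ distS u v ∧ distS u v ≤ k)

/-- The pairing `A ⊖ B`: entrywise concatenation of strings. -/
def pairL (A B : SList) : SList := List.zipWith (· ++ ·) A B

/-- The concatenation `AB = [v_i w_j]`, ordered lexicographically in `(i,j)`. -/
def concL (A B : SList) : SList := A.flatMap (fun u => B.map (fun v => u ++ v))

/-- the string `∗^m` of `m` jokers -/
def stars (m : ℕ) : Str := List.replicate m Tern.star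

/-- A triple of lists `T = (A,B,C)` together with the (intended common) string
lengths `a` of the entries of `A` and `b` of the entries of `B` (and `C`). -/
structure Triple where
  a : ℕ
  b : ℕ
  A : SList
  B : SList
  C : SList

namespace Triple

/-- `α(T)`: the common length of the strings of `A`. -/
def alpha (T : Triple) : ℕ := T.a

/-- `β(T)`: the common length of the strings of `B`. -/
def beta (T : Triple) : ℕ := T.b

/-- `δ(T) = α(T) + β(T)`. -/
def delta (T : Triple) : ℕ := T.a + T.b

/-- `n(T) = |A|`. -/
def nT (T : Triple) : ℕ := T.A.length

/-- `g(T) = |C|`. -/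
def gT (T : Triple) : ℕ := T.C.length

/-- A triple `T = (A,B,C)` is nice if: (1) `dist(u,v) ≤ 1` for all entries `u,v` of `A`;
(2) `|A| = |B|` and `A ⊖ B` is 2-neighborly; (3) `C` is a 1-neighborly sublist of `B`,
and `dist(u,v) ≤ 1` for every entry `u` of `B` and every entry `v` of `C`.
(The strings of `A` all have length `α(T)` and those of `B` length `β(T)`.) -/
def Nice (T : Triple) : Prop :=
  uniform T.A T.a ∧ uniform T.B T.b ∧
  (∀ u ∈ T.A, ∀ v ∈ T.A, distS u v ≤ 1) ∧
  T.A.length = T.B.length ∧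
  kNbr 2 (pairL T.A T.B) ∧
  T.C.Sublist T.B ∧ kNbr 1 T.C ∧
  (∀ u ∈ T.B, ∀ v ∈ T.C, distS u v ≤ 1)

/-- `T, T'` are concordant if `α(T) = α(T')` and `dist(u,v) ≤ 1` for all entries
`u, v` of `A + A'`. -/
def Concordant (T T' : Triple) : Prop :=
  T.a = T'.a ∧ ∀ u ∈ T.A ++ T'.A, ∀ v ∈ T.A ++ T'.A, distS u v ≤ 1

/-- The compound `T ⊗ T' = (A'', B'', C'')` where
`A'' = [0]A + [0]A' + (|C|·|C'|)·([1][∗^{α(T)}])`,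
`B'' = [0]B[∗^{β(T')}] + [1][∗^{β(T)}]B' + [∗]CC'`,
`C'' = [0]C[∗^{β(T')}] + [1][∗^{β(T)}]C'`. -/
def compound (T T' : Triple) : Triple where
  a := T.a + 1
  b := T.b + T'.b + 1
  A := (T.A.map (fun u => Tern.zero :: u)) ++ (T'.A.map (fun u => Tern.zero :: u)) ++
       List.replicate (T.C.length * T'.C.length) (Tern.one :: stars T.a)
  B := (T.B.map (fun u => Tern.zero :: (u ++ stars T'.b))) ++
       (T'.B.map (fun u => Tern.one :: (stars T.b ++ u))) ++
       ((concL T.C T'.C).map (fun u => Tern.star :: u))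
  C := (T.C.map (fun u => Tern.zero :: (u ++ stars T'.b))) ++
       (T'.C.map (fun u => Tern.one :: (stars T.b ++ u)))

/-- `T, T'` are congruent if they are concordant, `β(T) = β(T')`, `n(T) = n(T')`
and `g(T) = g(T')`. -/
def Congruent (T T' : Triple) : Prop :=
  Concordant T T' ∧ T.b = T'.b ∧ T.A.length = T'.A.length ∧ T.C.length = T'.C.length

end Triple

namespace Triple

/-- the iterates `T_0 = T`, `T_{k+1} = T_k ⊗ T_k` -/
def iterT (T : Triple) : ℕ → Triple
  | 0 => T
  | k + 1 => compound (iterT T k) (iterT T k)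

end Triple

open Tern in
/-- `G = [0, 1]` -/
def Glist : SList := [[zero], [one]]

open Tern in
/-- `H = [00, 01, 1∗]` -/
def Hlist : SList := [[zero, zero], [zero, one], [one, star]]

open Tern in
/-- `L = [000, 001, 01∗, 1∗∗]` -/
def Llist : SList := [[zero, zero, zero], [zero, zero, one], [zero, one, star], [one, star, star]]

open Tern in
/-- `T♭ = (3·[00] + 3·[01] + 3·[1∗], 3·H, H)`. -/
def Tflat : Triple :=
  ⟨2, 2,
    List.replicate 3 [zero, zero] ++ List.replicate 3 [zero, one] ++
      List.replicate 3 [one, star],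
    (List.replicate 3 Hlist).flatten,
    Hlist⟩

open Tern in
/-- `T♯ = (2·(3·[00] + 3·[01]) + 9·[1∗], 2·([0]H[∗∗]) + 2·([1][∗∗]H) + [∗]HH,
[0]H[∗∗] + [1][∗∗]H)`. -/
def Tsharp : Triple :=
  ⟨2, 5,
    (List.replicate 2 (List.replicate 3 [zero, zero] ++ List.replicate 3 [zero, one])).flatten ++
      List.replicate 9 [one, star],
    (List.replicate 2 (Hlist.map (fun u => zero :: (u ++ [star, star])))).flatten ++
      (List.replicate 2 (Hlist.map (fun u => one :: ([star, star] ++ u)))).flatten ++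
      (concL Hlist Hlist).map (fun u => star :: u),
    Hlist.map (fun u => zero :: (u ++ [star, star])) ++
      Hlist.map (fun u => one :: ([star, star] ++ u))⟩

open Tern in
/-- `T† = (4·[00] + 4·[01] + 4·[1∗], 3·L, L)`. -/
def Tdag : Triple :=
  ⟨2, 3,
    List.replicate 4 [zero, zero] ++ List.replicate 4 [zero, one] ++
      List.replicate 4 [one, star],
    (List.replicate 3 Llist).flatten,
    Llist⟩

open Tern in
/-- `T‡ = (2·[00] + 2·[01] + 3·[00] + 3·[01] + 6·[1∗],
2·([0]G[∗∗]) + 2·([1][∗]H) + [∗]GH, [0]G[∗∗] + [1][∗]H)`. -/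
def Tddag : Triple :=
  ⟨2, 4,
    List.replicate 2 [zero, zero] ++ List.replicate 2 [zero, one] ++
      List.replicate 3 [zero, zero] ++ List.replicate 3 [zero, one] ++
      List.replicate 6 [one, star],
    (List.replicate 2 (Glist.map (fun u => zero :: (u ++ [star, star])))).flatten ++
      (List.replicate 2 (Hlist.map (fun u => one :: (star :: u)))).flatten ++
      (concL Glist Hlist).map (fun u => star :: u),
    Glist.map (fun u => zero :: (u ++ [star, star])) ++
      Hlist.map (fun u => one :: (star :: u))⟩


/-!
Each compounding step `T ↦ T ⊗ T` raises `α` by one, sends `β + 1` to `2(β + 1)`, doubles `g`,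
and sends `n` to `2n + g²`. Since `g_k² = g_0² 4^k`, the recursion for `n` solves to
`n_k = (g_0²/2)·4^k + (n_0 − g_0²/2)·2^k`. The theorem plugs in `(α, β, n, g) = (2, 2, 9, 3)` for
`T♭` and `(2, 5, 21, 6)` for `T♯`.
-/

namespace Triple

@[simp]
lemma compound_a (T T' : Triple) : (T.compound T').a = T.a + 1 := rfl

@[simp]
lemma compound_b (T T' : Triple) : (T.compound T').b = T.b + T'.b + 1 := rfl

@[simp]
lemma length_compound_A (T T' : Triple) :
    (T.compound T').A.length = T.A.length + T'.A.length + T.C.length * T'.C.length := by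
  simp [compound, add_assoc]

@[simp]
lemma length_compound_C (T T' : Triple) :
    (T.compound T').C.length = T.C.length + T'.C.length := by
  simp [compound]

variable (T : Triple)

lemma iterT_a (k : ℕ) : (iterT T k).a = T.a + k := by
  induction k with
  | zero => rfl
  | succ k ih => simp [iterT, ih, add_assoc]

lemma iterT_b_add_one (k : ℕ) : (iterT T k).b + 1 = (T.b + 1) * 2 ^ k := by
  induction k with
  | zero => simp [iterT]
  | succ k ih => simp only [iterT, compound_b]; rw [pow_succ]; lia

lemma length_iterT_C (k : ℕ) : (iterT T k).C.length = T.C.length * 2 ^ k := by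
  induction k with
  | zero => simp [iterT]
  | succ k ih => simp only [iterT, length_compound_C, ih]; ring

lemma length_iterT_A (k : ℕ) :
    ((iterT T k).A.length : ℚ) =
      (T.C.length : ℚ) ^ 2 / 2 * 4 ^ k + (T.A.length - (T.C.length : ℚ) ^ 2 / 2) * 2 ^ k := by
  induction k with
  | zero => simp [iterT]
  | succ k ih =>
    have h4 : (4 : ℚ) ^ k = 2 ^ k * 2 ^ k := by rw [← mul_pow]; norm_num
    simp only [iterT, length_compound_A, length_iterT_C, Nat.cast_add, Nat.cast_mul, Nat.cast_pow,
      Nat.cast_ofNat, ih, pow_succ, h4]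
    ring

end Triple

open Triple in
/-- For the iterates `T♭_k` of `T♭` and `T♯_k` of `T♯`:
`α(T♭_k) = k+2`, `β(T♭_k) = 3·2^k−1`, `δ(T♭_k) = 3·2^k+k+1`, `g(T♭_k) = 3·2^k`,
`n(T♭_k) = (9/2)·4^k+(9/2)·2^k`; and `α(T♯_k) = k+2`, `β(T♯_k) = 6·2^k−1`,
`δ(T♯_k) = 6·2^k+k+1`, `g(T♯_k) = 6·2^k`, `n(T♯_k) = 18·4^k+3·2^k`. -/
theorem iter_flat_sharp_params (k : ℕ) :
    alpha (iterT Tflat k) = k + 2 ∧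
    beta (iterT Tflat k) = 3 * 2 ^ k - 1 ∧
    delta (iterT Tflat k) = 3 * 2 ^ k + k + 1 ∧
    gT (iterT Tflat k) = 3 * 2 ^ k ∧
    (nT (iterT Tflat k) : ℚ) = 9 / 2 * 4 ^ k + 9 / 2 * 2 ^ k ∧
    alpha (iterT Tsharp k) = k + 2 ∧
    beta (iterT Tsharp k) = 6 * 2 ^ k - 1 ∧
    delta (iterT Tsharp k) = 6 * 2 ^ k + k + 1 ∧
    gT (iterT Tsharp k) = 6 * 2 ^ k ∧
    (nT (iterT Tsharp k) : ℚ) = 18 * 4 ^ k + 3 * 2 ^ k := by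
  have hfa : (iterT Tflat k).a = 2 + k := iterT_a Tflat k
  have hfb : (iterT Tflat k).b + 1 = 3 * 2 ^ k := iterT_b_add_one Tflat k
  have hfg : (iterT Tflat k).C.length = 3 * 2 ^ k := length_iterT_C Tflat k
  have hfn := length_iterT_A Tflat k
  have hsa : (iterT Tsharp k).a = 2 + k := iterT_a Tsharp k
  have hsb : (iterT Tsharp k).b + 1 = 6 * 2 ^ k := iterT_b_add_one Tsharp k
  have hsg : (iterT Tsharp k).C.length = 6 * 2 ^ k := length_iterT_C Tsharp k
  have hsn := length_iterT_A Tsharp k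
  simp only [alpha, beta, delta, gT, nT]
  refine ⟨by lia, by lia, by lia, hfg, ?_, by lia, by lia, by lia, hsg, ?_⟩
  · rw [hfn]; norm_num [Tflat, Hlist]
  · rw [hsn]; norm_num [Tsharp, Hlist, concL]
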